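/- arXiv:2107.08428 — 4 statements merged into one kernel-verified Lean document; each statement's English description precedes it below -/
import Mathlib

section
/- Let V be a locally finite game graph that is draw-free, and let x be a position of R(V). If x has infinite rank in V, with 𝒢_V(x) = ∞(𝒜) for some 𝒜 (in which case necessarily 0 ∈ 𝒜), then x has infinite rank in R(V), and 𝒢_{R(V)}(x) = ∞(𝒜 − 1), where 𝒜 − 1 denotes the set {a ≥ 0 : a + 1 ∈ 𝒜}. -/
open scoped Classical

universe u

/-- `PosP Γ n` is the set `Pₙ` of positions from which the second player can win
within `n` rounds: `P₀` is the set of terminal positions, and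
`Pₙ₊₁ = {x : every option of x has an option in Pₙ}`. -/
def PosP {V : Type*} (Γ : V → Finset V) : ℕ → Set V
  | 0 => {x | Γ x = ∅}
  | n + 1 => {x | ∀ y ∈ Γ x, ∃ z ∈ Γ y, z ∈ PosP Γ n}

/-- `PosN Γ n` is the set `Nₙ`: for `n ≥ 1`, `Nₙ = {x : some option of x lies in Pₙ₋₁}`. -/
def PosN {V : Type*} (Γ : V → Finset V) : ℕ → Set V
  | 0 => ∅
  | n + 1 => {x | ∃ y ∈ Γ x, y ∈ PosP Γ n}

/-- The P-positions `𝒫 = ⋃ₙ Pₙ` (second player wins). -/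
def PPos {V : Type*} (Γ : V → Finset V) : Set V := ⋃ n, PosP Γ n

/-- The N-positions `𝒩 = ⋃ₙ Nₙ` (first player wins). -/
def NPos {V : Type*} (Γ : V → Finset V) : Set V := ⋃ n, PosN Γ n

/-- The D-positions `𝒟 = V ∖ (𝒫 ∪ 𝒩)` (draws). -/
def DPos {V : Type*} (Γ : V → Finset V) : Set V := (PPos Γ ∪ NPos Γ)ᶜ

/-- The mex (least natural number not attained) of the values `g y`, `y ∈ s`. -/
noncomputable def mexF {V : Type*} (s : Finset V) (g : V → ℕ∞) : ℕ :=
  sInf {n : ℕ | ∀ y ∈ s, g y ≠ (n : ℕ∞)}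

/-- The approximants `𝒢ₙ` of the extended Sprague-Grundy function. -/
noncomputable def Gfun {V : Type*} (Γ : V → Finset V) : ℕ → V → ℕ∞
  | 0 => fun x => if Γ x = ∅ then 0 else ⊤
  | n + 1 => fun x =>
      let m := mexF (Γ x) (Gfun Γ n)
      if ∀ y ∈ Γ x, Gfun Γ n y ≤ (m : ℕ∞) ∨ ∃ z ∈ Γ y, Gfun Γ n z = (m : ℕ∞)
      then (m : ℕ∞) else ⊤

/-- `x` has finite rank with (finite) Sprague-Grundy value `m`:
`𝒢ₙ(x) = m` for all sufficiently large `n`. -/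
def HasGVal {V : Type*} (Γ : V → Finset V) (x : V) (m : ℕ) : Prop :=
  ∃ n₀ : ℕ, ∀ n ≥ n₀, Gfun Γ n x = (m : ℕ∞)

/-- `x` has infinite rank: `𝒢ₙ(x) = ∞` for all `n`. -/
def InfiniteRank {V : Type*} (Γ : V → Finset V) (x : V) : Prop :=
  ∀ n : ℕ, Gfun Γ n x = ⊤

/-- The rank of `x`: the least `n` with `𝒢ₙ(x) < ∞`, or `∞` if there is none. -/
noncomputable def rank {V : Type*} (Γ : V → Finset V) (x : V) : ℕ∞ :=
  sInf ((↑) '' {n : ℕ | Gfun Γ n x ≠ ⊤})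

/-- For `x` of infinite rank, the set `𝒜` with `𝒢(x) = ∞(𝒜)`:
the set of finite Sprague-Grundy values of finite-rank options of `x`. -/
def ValSet {V : Type*} (Γ : V → Finset V) (x : V) : Set ℕ :=
  {a | ∃ y ∈ Γ x, HasGVal Γ y a}

/-- The graph of the disjunctive sum: move in exactly one coordinate. -/
noncomputable def sumGraph {V W : Type*} (Γ : V → Finset V) (Δ : W → Finset W) :
    V × W → Finset (V × W) := fun p =>
  (Γ p.1).image (fun u => (u, p.2)) ∪ (Δ p.2).image (fun w => (p.1, w))

/-- Two (positions of possibly different) games lie in the same outcome class. -/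
def SameOutcome {V W : Type*} (Γ : V → Finset V) (x : V) (Δ : W → Finset W) (y : W) : Prop :=
  (x ∈ PPos Γ ↔ y ∈ PPos Δ) ∧ (x ∈ NPos Γ ↔ y ∈ NPos Δ) ∧ (x ∈ DPos Γ ↔ y ∈ DPos Δ)

/-- Equivalence of games: `G + X` and `H + X` have the same outcome for every
locally finite game `X`. -/
def GameEquiv {V W : Type*} (Γ : V → Finset V) (x : V) (Δ : W → Finset W) (y : W) : Prop :=
  ∀ (X : Type u) (Ξ : X → Finset X) (z : X),
    SameOutcome (sumGraph Γ Ξ) (x, z) (sumGraph Δ Ξ) (y, z)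

/-- The nim heap `*m`: positions `0, …, m`, where from `k` one can move to any `j < k`. -/
def nimGraph (m : ℕ) : Fin (m + 1) → Finset (Fin (m + 1)) :=
  fun k => Finset.univ.filter (fun j => j < k)

/-- The reduced graph `R(V)`: the induced graph on the complement of the P-positions. -/
noncomputable def reducedGraph {V : Type*} (Γ : V → Finset V) :
    {x : V // x ∉ PPos Γ} → Finset {x : V // x ∉ PPos Γ} := fun x =>
  (Γ x.1).subtype (fun y => y ∉ PPos Γ)

/-- The vertex set of `R^{(k)}(V)`: positions which do not have finite rank with
Sprague-Grundy value `< k`. -/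
def RkSet {V : Type*} (Γ : V → Finset V) (k : ℕ) : Set V :=
  {x | ¬ ∃ m < k, HasGVal Γ x m}

/-- The induced game graph `R^{(k)}(V)` on `RkSet Γ k`. -/
noncomputable def RkGraph {V : Type*} (Γ : V → Finset V) (k : ℕ) :
    RkSet Γ k → Finset (RkSet Γ k) := fun x =>
  (Γ x.1).subtype (fun y => y ∈ RkSet Γ k)

/-- `V` is `k`-stable: every infinite-rank position `x`, with `𝒢(x) = ∞(𝒜)`,
has `{0, 1, …, k} ⊆ 𝒜`. -/
def kStable {V : Type*} (Γ : V → Finset V) (k : ℕ) : Prop :=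
  ∀ x, InfiniteRank Γ x → ∀ j ≤ k, j ∈ ValSet Γ x

/-- `l` is a directed walk from `o` to `x` in the graph `Γ`. -/
def IsWalk {V : Type*} (Γ : V → Finset V) (o x : V) (l : List V) : Prop :=
  l.head? = some o ∧ l.getLast? = some x ∧ l.Chain' (fun a b => b ∈ Γ a)

/-- `Γ` is a tree with root `o`: `o` has no incoming arcs, and every vertex is
reached from `o` by a unique directed walk. -/
def IsTree {V : Type*} (Γ : V → Finset V) (o : V) : Prop :=
  (∀ x, o ∉ Γ x) ∧ ∀ x, ∃! l : List V, IsWalk Γ o x l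

/-- `f` is a mex labelling: `f x` is the least natural number not attained by `f`
on the options of `x`, for every `x`. -/
def MexLabelling {V : Type*} (Γ : V → Finset V) (f : V → ℕ) : Prop :=
  ∀ x, f x = sInf {n : ℕ | ∀ y ∈ Γ x, f y ≠ n}


/-!
In a draw-free game every position outside `𝒫` has an option in `𝒫`, that is, an option of
value `0`. Deleting the P-positions therefore takes the value `0` out of every mex computation
of the remaining positions, and all finite values drop by one: a position of `R(V)` has finite
value `b` there exactly when it has value `b + 1` in `V`. Each direction is an induction on the
approximation level `n` of `𝒢ₙ`, comparing one step of the recursion in `R(V)` with one step in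
`V`, where the finite values of `V` are recognised as a fixed point of that step. Hence a
finite value of `x` in `R(V)` would give one in `V`, and the values of the finite-rank options
shift from `𝒜` to `𝒜 − 1`.
-/

section SpragueGrundy

variable {V : Type*}

lemma mexF_eq_iff {s : Finset V} {g : V → ℕ∞} {m : ℕ} :
    mexF s g = m ↔ (∀ a < m, ∃ y ∈ s, g y = a) ∧ ∀ y ∈ s, g y ≠ m := by
  have hne : {n : ℕ | ∀ y ∈ s, g y ≠ (n : ℕ∞)}.Nonempty := by
    refine ⟨(s.sup fun y => (g y).toNat) + 1, fun y hy hgy => ?_⟩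
    have hle := Finset.le_sup (f := fun y => (g y).toNat) hy
    rw [hgy, ENat.toNat_natCast] at hle
    omega
  constructor
  · rintro rfl
    refine ⟨fun a ha => ?_, Nat.sInf_mem hne⟩
    by_contra! h
    exact Nat.notMem_of_lt_sInf ha h
  · rintro ⟨hattains, havoids⟩
    refine le_antisymm (Nat.sInf_le havoids) (not_lt.1 fun hlt => ?_)
    obtain ⟨y, hy, hgy⟩ := hattains _ hlt
    exact Nat.sInf_mem hne y hy hgy

/-- One step of the recursion defining `𝒢ₙ₊₁` from `𝒢ₙ`, with the values of the previous step
given as a relation `R y a` ("`y` has value `a`"). -/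
structure GStep (Γ : V → Finset V) (R : V → ℕ → Prop) (x : V) (m : ℕ) : Prop where
  attains : ∀ a < m, ∃ y ∈ Γ x, R y a
  avoids : ∀ y ∈ Γ x, ¬ R y m
  reverts : ∀ y ∈ Γ x, (∃ a < m, R y a) ∨ ∃ z ∈ Γ y, R z m

namespace GStep

variable {Γ : V → Finset V} {R R' : V → ℕ → Prop} {x : V} {m : ℕ}

lemma bot_iff : GStep Γ (fun _ _ => False) x m ↔ Γ x = ∅ ∧ m = 0 := by
  constructor
  · intro h
    refine ⟨Finset.eq_empty_of_forall_notMem fun y hy => ?_, Nat.eq_zero_of_not_pos fun hm => ?_⟩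
    · simpa using h.reverts y hy
    · simpa using h.attains 0 hm
  · rintro ⟨hx, rfl⟩
    exact ⟨by simp, by simp [hx], by simp [hx]⟩

lemma zero_iff :
    GStep Γ R x 0 ↔ (∀ y ∈ Γ x, ¬ R y 0) ∧ ∀ y ∈ Γ x, ∃ z ∈ Γ y, R z 0 :=
  ⟨fun h => ⟨h.avoids, fun y hy => (h.reverts y hy).resolve_left (by simp)⟩,
    fun h => ⟨by simp, h.1, fun y hy => Or.inr (h.2 y hy)⟩⟩

lemma mono (h : GStep Γ R x m) (hRR' : ∀ y a, R y a → R' y a)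
    (hR' : ∀ y a b, R' y a → R' y b → a = b)
    (hR'R : ∀ y ∈ Γ x, R' y m → ∀ z ∈ Γ y, ¬ R z m) : GStep Γ R' x m where
  attains a ha := (h.attains a ha).imp fun y ⟨hy, hya⟩ => ⟨hy, hRR' y a hya⟩
  avoids y hy hym := by
    rcases h.reverts y hy with ⟨a, ha, hya⟩ | ⟨z, hz, hzm⟩
    · exact ha.ne (hR' y a m (hRR' y a hya) hym)
    · exact hR'R y hy hym z hz hzm
  reverts y hy := (h.reverts y hy).imp
    (fun ⟨a, ha, hya⟩ => ⟨a, ha, hRR' y a hya⟩) (fun ⟨z, hz, hzm⟩ => ⟨z, hz, hRR' z m hzm⟩)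

end GStep

section Gfun

variable {Γ : V → Finset V} {x y z : V} {n N m m' : ℕ}

lemma Gfun_zero_eq_iff : Gfun Γ 0 x = m ↔ GStep Γ (fun _ _ => False) x m := by
  rw [GStep.bot_iff]
  dsimp only [Gfun]
  split_ifs with hx <;> simp [hx, eq_comm]

lemma Gfun_succ_eq_iff : Gfun Γ (n + 1) x = m ↔ GStep Γ (fun y a => Gfun Γ n y = a) x m := by
  dsimp only [Gfun]
  split_ifs with hC
  · rw [Nat.cast_inj]
    constructor
    · rintro rfl
      obtain ⟨hattains, havoids⟩ := mexF_eq_iff.1 rfl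
      refine ⟨hattains, havoids, fun y hy => (hC y hy).imp_left fun hle => ?_⟩
      obtain ⟨a, hya, ha⟩ := ENat.le_natCast_iff.1 hle
      exact ⟨a, ha.lt_of_ne (by rintro rfl; exact havoids y hy hya), hya⟩
    · exact fun h => mexF_eq_iff.2 ⟨h.attains, h.avoids⟩
  · simp only [ENat.top_ne_natCast, false_iff]
    intro h
    rw [mexF_eq_iff.2 ⟨h.attains, h.avoids⟩] at hC
    exact hC fun y hy => (h.reverts y hy).imp_left fun ⟨a, ha, hya⟩ => hya ▸ Nat.cast_le.2 ha.le

lemma Gfun_succ_eq_of_eq (h : Gfun Γ n x = m) : Gfun Γ (n + 1) x = m := by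
  induction n generalizing x m with
  | zero =>
    refine Gfun_succ_eq_iff.2 ((Gfun_zero_eq_iff.1 h).mono (fun _ _ => False.elim) ?_ ?_)
    · exact fun y a b ha hb => by exact_mod_cast ha.symm.trans hb
    · exact fun _ _ _ _ _ => id
  | succ k ih =>
    refine Gfun_succ_eq_iff.2 ((Gfun_succ_eq_iff.1 h).mono (fun _ _ => ih) ?_ ?_)
    · exact fun y a b ha hb => by exact_mod_cast ha.symm.trans hb
    · exact fun y _ hy => (Gfun_succ_eq_iff.1 hy).avoids

lemma Gfun_eq_of_le (h : Gfun Γ n x = m) (hnN : n ≤ N) : Gfun Γ N x = m := by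
  induction N, hnN using Nat.le_induction with
  | base => exact h
  | succ N _ ih => exact Gfun_succ_eq_of_eq ih

lemma Gfun_ne_of_mem (hz : z ∈ Γ y) (hy : Gfun Γ n y = m) : Gfun Γ n z ≠ m :=
  (Gfun_succ_eq_iff.1 (Gfun_succ_eq_of_eq hy)).avoids z hz

lemma mem_posP_iff_Gfun_eq_zero : x ∈ PosP Γ n ↔ Gfun Γ n x = (0 : ℕ) := by
  induction n generalizing x with
  | zero =>
    rw [Gfun_zero_eq_iff, GStep.bot_iff]
    simp [PosP]
  | succ k ih =>
    simp only [PosP, Set.mem_ofPred_eq, Gfun_succ_eq_iff, GStep.zero_iff, ih]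
    exact ⟨fun h => ⟨fun y hy hy0 => (h y hy).elim fun z ⟨hz, hz0⟩ => Gfun_ne_of_mem hz hy0 hz0, h⟩,
      And.right⟩

lemma hasGVal_of_Gfun_eq (h : Gfun Γ n x = m) : HasGVal Γ x m :=
  ⟨n, fun _ hN => Gfun_eq_of_le h hN⟩

lemma hasGVal_iff_exists_Gfun_eq : HasGVal Γ x m ↔ ∃ n, Gfun Γ n x = m :=
  ⟨fun ⟨n, hn⟩ => ⟨n, hn n le_rfl⟩, fun ⟨_, hn⟩ => hasGVal_of_Gfun_eq hn⟩

lemma HasGVal.not_infiniteRank (h : HasGVal Γ x m) : ¬ InfiniteRank Γ x := fun hinf => by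
  obtain ⟨n, hn⟩ := h
  simpa [hinf n] using hn n le_rfl

lemma HasGVal.unique (h : HasGVal Γ x m) (h' : HasGVal Γ x m') : m = m' := by
  obtain ⟨n, hn⟩ := h
  obtain ⟨n', hn'⟩ := h'
  exact_mod_cast (hn _ (le_max_left n n')).symm.trans (hn' _ (le_max_right n n'))

lemma HasGVal.not_hasGVal_of_mem (hy : HasGVal Γ y m) (hz : z ∈ Γ y) : ¬ HasGVal Γ z m := by
  rintro ⟨n', hn'⟩
  obtain ⟨n, hn⟩ := hy
  exact Gfun_ne_of_mem hz (hn _ (le_max_left n n')) (hn' _ (le_max_right n n'))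

lemma hasGVal_zero_iff : HasGVal Γ x 0 ↔ x ∈ PPos Γ := by
  simp only [hasGVal_iff_exists_Gfun_eq, PPos, Set.mem_iUnion, mem_posP_iff_Gfun_eq_zero]

lemma notMem_pPos_of_hasGVal_succ (h : HasGVal Γ x (m + 1)) : x ∉ PPos Γ :=
  fun hx => m.succ_ne_zero (h.unique (hasGVal_zero_iff.2 hx))

lemma hasGVal_iff_gStep : HasGVal Γ x m ↔ GStep Γ (HasGVal Γ) x m := by
  constructor
  · rintro ⟨n, hn⟩
    refine (Gfun_succ_eq_iff.1 (hn (n + 1) n.le_succ)).mono (fun _ _ => hasGVal_of_Gfun_eq)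
      (fun _ _ _ => HasGVal.unique)
      fun _ _ hy _ hz hzm => hy.not_hasGVal_of_mem hz (hasGVal_of_Gfun_eq hzm)
  · intro h
    have hattains : ∀ᶠ N in Filter.atTop, ∀ a ∈ Finset.range m, ∃ y ∈ Γ x, Gfun Γ N y = a := by
      refine (Filter.eventually_all_finset _).2 fun a ha => ?_
      obtain ⟨y, hy, n, hn⟩ := h.attains a (Finset.mem_range.1 ha)
      exact Filter.eventually_atTop.2 ⟨n, fun N hN => ⟨y, hy, hn N hN⟩⟩
    have hreverts : ∀ᶠ N in Filter.atTop, ∀ y ∈ Γ x,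
        (∃ a < m, Gfun Γ N y = a) ∨ ∃ z ∈ Γ y, Gfun Γ N z = m := by
      refine (Filter.eventually_all_finset _).2 fun y hy => ?_
      rcases h.reverts y hy with ⟨a, ha, n, hn⟩ | ⟨z, hz, n, hn⟩
      · exact Filter.eventually_atTop.2 ⟨n, fun N hN => Or.inl ⟨a, ha, hn N hN⟩⟩
      · exact Filter.eventually_atTop.2 ⟨n, fun N hN => Or.inr ⟨z, hz, hn N hN⟩⟩
    obtain ⟨N, hattainsN, hrevertsN⟩ := (hattains.and hreverts).exists
    refine hasGVal_of_Gfun_eq (n := N + 1) (Gfun_succ_eq_iff.2 ⟨?_, ?_, hrevertsN⟩)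
    · exact fun a ha => hattainsN a (Finset.mem_range.2 ha)
    · exact fun y hy hym => h.avoids y hy (hasGVal_of_Gfun_eq hym)

end Gfun

section Reduced

variable {Γ : V → Finset V}

lemma mem_reducedGraph {x y : {v : V // v ∉ PPos Γ}} :
    y ∈ reducedGraph Γ x ↔ (y : V) ∈ Γ x := by
  simp [reducedGraph, Finset.mem_subtype]

lemma exists_mem_pPos_of_notMem_pPos (hdf : DPos Γ = ∅) {x : V} (hx : x ∉ PPos Γ) :
    ∃ y ∈ Γ x, y ∈ PPos Γ := by
  have hxN : x ∈ NPos Γ := by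
    by_contra hxN
    have hxD : x ∈ DPos Γ := fun h => h.elim hx hxN
    simp [hdf] at hxD
  obtain ⟨_ | j, hj⟩ := Set.mem_iUnion.1 hxN
  · exact hj.elim
  · obtain ⟨y, hy, hyP⟩ := hj
    exact ⟨y, hy, Set.mem_iUnion.2 ⟨j, hyP⟩⟩

/-- The value `0` missing from `R(V)` is supplied by a P-option, which exists as `V` is
draw-free. -/
lemma gStep_succ_of_gStep_reducedGraph (hdf : DPos Γ = ∅) {x : {v : V // v ∉ PPos Γ}}
    {T : {v : V // v ∉ PPos Γ} → ℕ → Prop} {b : ℕ} (hT : ∀ y c, T y c → HasGVal Γ y (c + 1))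
    (h : GStep (reducedGraph Γ) T x b) : GStep Γ (HasGVal Γ) x (b + 1) where
  attains a ha := by
    cases a with
    | zero =>
      obtain ⟨y, hy, hyP⟩ := exists_mem_pPos_of_notMem_pPos hdf x.2
      exact ⟨y, hy, hasGVal_zero_iff.2 hyP⟩
    | succ c =>
      obtain ⟨y, hy, hyc⟩ := h.attains c (by omega)
      exact ⟨y, mem_reducedGraph.1 hy, hT y c hyc⟩
  avoids y hy hyb := by
    have hyP := notMem_pPos_of_hasGVal_succ hyb
    rcases h.reverts ⟨y, hyP⟩ (mem_reducedGraph.2 hy) with ⟨c, hc, hyc⟩ | ⟨z, hz, hzb⟩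
    · have := hyb.unique (hT _ c hyc)
      omega
    · exact hyb.not_hasGVal_of_mem (mem_reducedGraph.1 hz) (hT z b hzb)
  reverts y hy := by
    by_cases hyP : y ∈ PPos Γ
    · exact Or.inl ⟨0, b.succ_pos, hasGVal_zero_iff.2 hyP⟩
    rcases h.reverts ⟨y, hyP⟩ (mem_reducedGraph.2 hy) with ⟨c, hc, hyc⟩ | ⟨z, hz, hzb⟩
    · exact Or.inl ⟨c + 1, by omega, hT _ c hyc⟩
    · exact Or.inr ⟨z, mem_reducedGraph.1 hz, hT z b hzb⟩

lemma hasGVal_succ_of_Gfun_reducedGraph_eq (hdf : DPos Γ = ∅) {n : ℕ}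
    {x : {v : V // v ∉ PPos Γ}} {b : ℕ} (h : Gfun (reducedGraph Γ) n x = b) :
    HasGVal Γ x (b + 1) := by
  induction n generalizing x b with
  | zero =>
    exact hasGVal_iff_gStep.2 <|
      gStep_succ_of_gStep_reducedGraph hdf (fun _ _ => False.elim) (Gfun_zero_eq_iff.1 h)
  | succ k ih =>
    exact hasGVal_iff_gStep.2 <|
      gStep_succ_of_gStep_reducedGraph hdf (fun _ _ => ih) (Gfun_succ_eq_iff.1 h)

lemma gStep_reducedGraph_of_gStep_succ (hdf : DPos Γ = ∅) {y : {v : V // v ∉ PPos Γ}}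
    {U : V → ℕ → Prop} {m : ℕ} (hU : ∀ w c, U w c → HasGVal Γ w c)
    (hUR : ∀ w (hw : w ∉ PPos Γ) c, U w (c + 1) → HasGVal (reducedGraph Γ) ⟨w, hw⟩ c)
    (hy : HasGVal Γ y (m + 1)) (h : GStep Γ U y (m + 1)) :
    GStep (reducedGraph Γ) (HasGVal (reducedGraph Γ)) y m where
  attains b hb := by
    obtain ⟨w, hw, hwb⟩ := h.attains (b + 1) (by omega)
    have hwP := notMem_pPos_of_hasGVal_succ (hU _ _ hwb)
    exact ⟨⟨w, hwP⟩, mem_reducedGraph.2 hw, hUR w hwP b hwb⟩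
  avoids w hw hwm := by
    obtain ⟨n, hn⟩ := hasGVal_iff_exists_Gfun_eq.1 hwm
    exact hy.not_hasGVal_of_mem (mem_reducedGraph.1 hw)
      (hasGVal_succ_of_Gfun_reducedGraph_eq hdf hn)
  reverts w hw := by
    rcases h.reverts w (mem_reducedGraph.1 hw) with ⟨_ | c, hc, hwc⟩ | ⟨z, hz, hzm⟩
    · exact absurd (hasGVal_zero_iff.1 (hU _ _ hwc)) w.2
    · exact Or.inl ⟨c, by omega, hUR w w.2 c hwc⟩
    · have hzP := notMem_pPos_of_hasGVal_succ (hU _ _ hzm)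
      exact Or.inr ⟨⟨z, hzP⟩, mem_reducedGraph.2 hz, hUR z hzP m hzm⟩

lemma hasGVal_reducedGraph_of_Gfun_eq_succ (hdf : DPos Γ = ∅) {n : ℕ} {y : V}
    (hyP : y ∉ PPos Γ) {m : ℕ} (h : Gfun Γ n y = (m + 1 : ℕ)) :
    HasGVal (reducedGraph Γ) ⟨y, hyP⟩ m := by
  induction n generalizing y m with
  | zero =>
    exact hasGVal_iff_gStep.2 <| gStep_reducedGraph_of_gStep_succ hdf
      (fun _ _ => False.elim) (fun _ _ _ => False.elim) (hasGVal_of_Gfun_eq h)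
      (Gfun_zero_eq_iff.1 h)
  | succ k ih =>
    exact hasGVal_iff_gStep.2 <| gStep_reducedGraph_of_gStep_succ hdf
      (fun _ _ => hasGVal_of_Gfun_eq) (fun _ hw _ => ih hw) (hasGVal_of_Gfun_eq h)
      (Gfun_succ_eq_iff.1 h)

lemma hasGVal_reducedGraph_iff (hdf : DPos Γ = ∅) {x : {v : V // v ∉ PPos Γ}} {m : ℕ} :
    HasGVal (reducedGraph Γ) x m ↔ HasGVal Γ x (m + 1) := by
  constructor
  · intro h
    obtain ⟨_, hn⟩ := hasGVal_iff_exists_Gfun_eq.1 h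
    exact hasGVal_succ_of_Gfun_reducedGraph_eq hdf hn
  · intro h
    obtain ⟨_, hn⟩ := hasGVal_iff_exists_Gfun_eq.1 h
    exact hasGVal_reducedGraph_of_Gfun_eq_succ hdf x.2 hn

end Reduced

end SpragueGrundy

/-- if `V` is draw-free and `x ∈ R(V)` has infinite rank in `V`
with `𝒢_V(x) = ∞(𝒜)`, then necessarily `0 ∈ 𝒜`, and `x` has infinite rank in
`R(V)` with `𝒢_{R(V)}(x) = ∞(𝒜 − 1)` where `𝒜 − 1 = {a ≥ 0 : a + 1 ∈ 𝒜}`. -/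
theorem stmt10 {V : Type*} (Γ : V → Finset V) (hdf : DPos Γ = ∅)
    (x : V) (hx : x ∉ PPos Γ) (A : Set ℕ)
    (hinf : InfiniteRank Γ x) (hA : ValSet Γ x = A) :
    0 ∈ A ∧ InfiniteRank (reducedGraph Γ) ⟨x, hx⟩ ∧
      ValSet (reducedGraph Γ) ⟨x, hx⟩ = {a : ℕ | a + 1 ∈ A} := by
  subst hA
  refine ⟨?_, fun n => ?_, ?_⟩
  · obtain ⟨y, hy, hyP⟩ := exists_mem_pPos_of_notMem_pPos hdf hx
    exact ⟨y, hy, hasGVal_zero_iff.2 hyP⟩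
  · by_contra hn
    obtain ⟨b, hb⟩ := ENat.ne_top_iff_exists.1 hn
    exact (hasGVal_succ_of_Gfun_reducedGraph_eq hdf hb.symm).not_infiniteRank hinf
  · ext a
    constructor
    · rintro ⟨y, hy, hya⟩
      exact ⟨y, mem_reducedGraph.1 hy, (hasGVal_reducedGraph_iff hdf).1 hya⟩
    · rintro ⟨y, hy, hya⟩
      have hyP := notMem_pPos_of_hasGVal_succ hya
      exact ⟨⟨y, hyP⟩, mem_reducedGraph.2 hy, (hasGVal_reducedGraph_iff hdf).2 hya⟩
end

section
/- Every locally finite game graph that is a tree (with some root o) admits at least one mex labelling. -/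
open scoped Classical

universe u

/-!
Depth grades a tree: every arc raises it by one. Iterating the mex operator `N + 1 - d x` times
from the zero labelling therefore gives a labelling satisfying the mex condition at every vertex of
depth at most `N`, and every such labelling is bounded at `x` by the out-degree of `x`. Along an
ultrafilter on `ℕ` these truncated labellings are eventually constant at each vertex, and the
pointwise limit is a mex labelling, since the mex condition at `x` involves only finitely many
vertices.
-/

/-- `MexLabelling Γ f` unfolds to `∀ x, f x = mex (Γ x) f`. -/
noncomputable def mex {V : Type*} (s : Finset V) (g : V → ℕ) : ℕ :=
  sInf {n : ℕ | ∀ y ∈ s, g y ≠ n}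

section Mex

variable {V : Type*}

theorem mex_congr {s : Finset V} {g g' : V → ℕ} (h : ∀ y ∈ s, g y = g' y) :
    mex s g = mex s g' := by
  unfold mex
  congr 1
  ext n
  exact forall₂_congr fun y hy => by rw [h y hy]

theorem mex_le_card (s : Finset V) (g : V → ℕ) : mex s g ≤ s.card := by
  have hlt : (s.image g).card < (Finset.range (s.card + 1)).card := by
    simpa [Nat.lt_succ_iff] using Finset.card_image_le (s := s) (f := g)
  obtain ⟨n, hn_range, hn_image⟩ :=
    Finset.not_subset.mp fun hsub => (Finset.card_le_card hsub).not_gt hlt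
  calc mex s g ≤ n :=
        Nat.sInf_le fun y hy hgy => hn_image (hgy ▸ Finset.mem_image_of_mem g hy)
    _ ≤ s.card := Nat.lt_succ_iff.mp (Finset.mem_range.mp hn_range)

noncomputable def mexIterate (Γ : V → Finset V) : ℕ → V → ℕ
  | 0 => fun _ => 0
  | k + 1 => fun x => mex (Γ x) (mexIterate Γ k)

theorem mexIterate_le_card (Γ : V → Finset V) (k : ℕ) (x : V) :
    mexIterate Γ k x ≤ (Γ x).card := by
  cases k with
  | zero => exact Nat.zero_le _
  | succ k => exact mex_le_card _ _

end Mex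

theorem Ultrafilter.exists_eventually_eq_of_forall_le {ι : Type*} (U : Ultrafilter ι)
    (g : ι → ℕ) {B : ℕ} (hB : ∀ i, g i ≤ B) : ∃ v, ∀ᶠ i in U, g i = v := by
  have hrange : Set.Iic B ∈ U.map g :=
    Ultrafilter.mem_map.mpr (Filter.Eventually.of_forall hB)
  obtain ⟨v, -, hv⟩ := Ultrafilter.eq_pure_of_finite_mem (Set.finite_Iic B) hrange
  exact ⟨v, Ultrafilter.mem_map.mp (hv ▸ Filter.mem_pure.mpr rfl : {v} ∈ U.map g)⟩

theorem exists_mexLabelling_of_eventually {ι V : Type*} (Γ : V → Finset V) (l : Filter ι)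
    [l.NeBot] (g : ι → V → ℕ) (B : V → ℕ) (hB : ∀ i x, g i x ≤ B x)
    (hmex : ∀ x, ∀ᶠ i in l, g i x = mex (Γ x) (g i)) : ∃ f : V → ℕ, MexLabelling Γ f := by
  let U := Ultrafilter.of l
  have hle : (U : Filter ι) ≤ l := Ultrafilter.of_le l
  choose f hf using fun x => U.exists_eventually_eq_of_forall_le (g · x) (hB · x)
  refine ⟨f, fun x => ?_⟩
  have hnear : ∀ᶠ i in U, (g i x = mex (Γ x) (g i) ∧ g i x = f x) ∧ ∀ y ∈ Γ x, g i y = f y :=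
    (((hmex x).filter_mono hle).and (hf x)).and
      ((Filter.eventually_all_finset _).mpr fun y _ => hf y)
  obtain ⟨i, ⟨hi_mex, hi_x⟩, hi_options⟩ := hnear.exists
  calc f x = g i x := hi_x.symm
    _ = mex (Γ x) (g i) := hi_mex
    _ = mex (Γ x) f := mex_congr hi_options

theorem exists_mexLabelling_of_grading {V : Type*} (Γ : V → Finset V) (d : V → ℕ)
    (hd : ∀ x, ∀ y ∈ Γ x, d y = d x + 1) : ∃ f : V → ℕ, MexLabelling Γ f := by
  refine exists_mexLabelling_of_eventually Γ Filter.atTop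
    (fun N x => mexIterate Γ (N + 1 - d x) x) (fun x => (Γ x).card)
    (fun N x => mexIterate_le_card Γ _ x) fun x => ?_
  filter_upwards [Filter.eventually_ge_atTop (d x)] with N hN
  -- at depth `≤ N`, the vertex `x` has received one more iteration than each of its options
  obtain ⟨k, hk⟩ : ∃ k, N + 1 - d x = k + 1 := ⟨N - d x, by omega⟩
  simp only [hk, mexIterate]
  exact mex_congr fun y hy => by congr 1; have := hd x y hy; omega

theorem IsWalk.concat {V : Type*} {Γ : V → Finset V} {o x y : V} {l : List V}
    (hl : IsWalk Γ o x l) (hy : y ∈ Γ x) : IsWalk Γ o y (l ++ [y]) := by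
  obtain ⟨hhead, hlast, hchain⟩ := hl
  refine ⟨by simp [hhead], by simp,
    List.isChain_append.mpr ⟨hchain, List.isChain_singleton _, ?_⟩⟩
  intro a ha b hb
  simp_all

theorem IsTree.exists_grading {V : Type*} {Γ : V → Finset V} {o : V} (h : IsTree Γ o) :
    ∃ d : V → ℕ, ∀ x, ∀ y ∈ Γ x, d y = d x + 1 := by
  choose w hw using h.2
  refine ⟨fun x => (w x).length, fun x y hy => ?_⟩
  show (w y).length = (w x).length + 1
  rw [← (hw y).2 _ ((hw x).1.concat hy), List.length_append, List.length_singleton]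

/-- every locally finite game graph which is a tree admits at
least one mex labelling. -/
theorem stmt12 {V : Type*} (Γ : V → Finset V) (o : V) (h : IsTree Γ o) :
    ∃ f : V → ℕ, MexLabelling Γ f := by
  obtain ⟨d, hd⟩ := h.exists_grading
  exact exists_mexLabelling_of_grading Γ d hd
end

section
/- Let V be a locally finite game graph, let f be a mex labelling of V, and let x ∈ V be a position of finite rank with 𝒢(x) = m. Then f(x) = m. -/
open scoped Classical

universe u

/-! A mex labelling agrees with every approximant `𝒢ₙ` wherever `𝒢ₙ` is finite, by induction on
`n`: a finite value `𝒢ₙ₊₁(x) = m` certifies that every value below `m` occurs among the options of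
`x`, and that each option `y` either has a finite value `𝒢ₙ(y) ≠ m` or an option `z` with
`𝒢ₙ(z) = m`, so that `f y ≠ f z = m`. -/

section Mex

variable {V : Type*}

theorem setOf_forall_ne_natCast_nonempty (s : Finset V) (g : V → ℕ∞) :
    {n : ℕ | ∀ y ∈ s, g y ≠ (n : ℕ∞)}.Nonempty := by
  obtain ⟨n, hn⟩ :=
    ((s.finite_toSet.image g).preimage Nat.cast_injective.injOn).infinite_compl.nonempty
  exact ⟨n, fun y hy hyn => hn ⟨y, hy, hyn⟩⟩

theorem mexF_ne (s : Finset V) (g : V → ℕ∞) : ∀ y ∈ s, g y ≠ (mexF s g : ℕ∞) :=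
  Nat.sInf_mem (setOf_forall_ne_natCast_nonempty s g)

theorem exists_eq_of_lt_mexF {s : Finset V} {g : V → ℕ∞} {j : ℕ} (hj : j < mexF s g) :
    ∃ y ∈ s, g y = (j : ℕ∞) := by
  by_contra! h
  exact Nat.notMem_of_lt_sInf hj h

theorem mexF_eq_of {s : Finset V} {g : V → ℕ∞} {m : ℕ} (hne : ∀ y ∈ s, g y ≠ (m : ℕ∞))
    (hlt : ∀ j < m, ∃ y ∈ s, g y = (j : ℕ∞)) : mexF s g = m :=
  IsLeast.csInf_eq ⟨hne, fun j hj => not_lt.1 fun hjm =>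
    let ⟨y, hy, hyj⟩ := hlt j hjm
    hj y hy hyj⟩

end Mex

section Gfun

variable {V : Type*} {Γ : V → Finset V}

theorem Gfun_zero_eq_natCast {x : V} {m : ℕ} (h : Gfun Γ 0 x = m) : Γ x = ∅ ∧ m = 0 := by
  by_cases hx : Γ x = ∅
  · simp only [Gfun, hx, if_true] at h
    exact ⟨hx, mod_cast h.symm⟩
  · simp [Gfun, hx] at h

theorem Gfun_succ_eq_natCast {n : ℕ} {x : V} {m : ℕ} (h : Gfun Γ (n + 1) x = m) :
    mexF (Γ x) (Gfun Γ n) = m ∧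
      ∀ y ∈ Γ x, Gfun Γ n y ≤ (m : ℕ∞) ∨ ∃ z ∈ Γ y, Gfun Γ n z = (m : ℕ∞) := by
  simp only [Gfun] at h
  split_ifs at h with hcond
  · obtain rfl : mexF (Γ x) (Gfun Γ n) = m := mod_cast h
    exact ⟨rfl, hcond⟩
  · exact absurd h.symm (ENat.natCast_ne_top m)

end Gfun

namespace MexLabelling

variable {V : Type*} {Γ : V → Finset V} {f : V → ℕ}

theorem eq_mexF (hf : MexLabelling Γ f) (x : V) : f x = mexF (Γ x) (fun y => (f y : ℕ∞)) := by
  rw [show f x = _ from hf x]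
  simp only [mexF, ne_eq, Nat.cast_inj]

theorem eq_of (hf : MexLabelling Γ f) {x : V} {m : ℕ} (hne : ∀ y ∈ Γ x, f y ≠ m)
    (hlt : ∀ j < m, ∃ y ∈ Γ x, f y = j) : f x = m := by
  rw [hf.eq_mexF]
  refine mexF_eq_of (fun y hy => ?_) fun j hj => ?_
  · exact_mod_cast hne y hy
  · obtain ⟨y, hy, hyj⟩ := hlt j hj
    exact ⟨y, hy, congrArg _ hyj⟩

theorem ne_of_mem (hf : MexLabelling Γ f) {y z : V} (hz : z ∈ Γ y) : f z ≠ f y := by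
  rw [hf.eq_mexF y]
  exact_mod_cast mexF_ne (Γ y) (fun y => (f y : ℕ∞)) z hz

theorem eq_of_Gfun_eq (hf : MexLabelling Γ f) :
    ∀ (n : ℕ) {x : V} {m : ℕ}, Gfun Γ n x = m → f x = m
  | 0, x, m, h => by
    obtain ⟨hx, rfl⟩ := Gfun_zero_eq_natCast h
    exact hf.eq_of (by simp [hx]) (by simp)
  | n + 1, x, m, h => by
    obtain ⟨hmex, hopt⟩ := Gfun_succ_eq_natCast h
    refine hf.eq_of (fun y hy => ?_) fun j hj => ?_
    · rcases hopt y hy with hle | ⟨z, hz, hzm⟩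
      · obtain ⟨j, hj⟩ := ENat.ne_top_iff_exists.mp (ne_top_of_le_ne_top (ENat.natCast_ne_top m) hle)
        have hjm : j ≠ m := by
          rintro rfl
          exact mexF_ne (Γ x) (Gfun Γ n) y hy (by rw [← hj, hmex])
        rwa [hf.eq_of_Gfun_eq n hj.symm]
      · exact fun hym => hf.ne_of_mem hz (by rw [hf.eq_of_Gfun_eq n hzm, hym])
    · obtain ⟨y, hy, hyj⟩ := exists_eq_of_lt_mexF (hmex ▸ hj)
      exact ⟨y, hy, hf.eq_of_Gfun_eq n hyj⟩

end MexLabelling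

/-- if `f` is a mex labelling of `V` and `x` has finite rank with
`𝒢(x) = m`, then `f x = m`. -/
theorem stmt13 {V : Type*} (Γ : V → Finset V) (f : V → ℕ) (hf : MexLabelling Γ f)
    (x : V) (m : ℕ) (h : HasGVal Γ x m) :
    f x = m := by
  obtain ⟨n₀, hn₀⟩ := h
  exact hf.eq_of_Gfun_eq n₀ (hn₀ n₀ le_rfl)
end

section
/- For p ∈ (0,1), let φ_p(s) = (1−p) + p s⁴ and h_p(s) = 1 − φ_p(1 − φ_p(s)) for s ∈ [0,1]. Then h_p has a unique fixed point in [0,1] if and only if p ≤ 5^{3/4}/4. -/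
/-!
Write `F = 1 - φ_p`, so that `h_p = F ∘ F`. The decreasing map `F` has a fixed point `s⋆ ∈ (0, 1]`,
which is also fixed by `h_p`, and `h_p'(s) = 16 p⁵ (s (1 - s⁴))³`. The factor `s (1 - s⁴)` peaks at
`c = 5^{-1/4}` with value `4c/5`, and `16 p⁵ (4c/5)³ ≤ 1` exactly when `p ≤ 5c/4 = 5^{3/4}/4`.
Below the threshold `h_p' < 1` away from `c`, so `h_p(s) - s` is strictly decreasing and `s⋆` is its
only zero. Above it `h_p'(s⋆) = (4 p s⋆³)² > 1`, so `h_p(s) - s` is negative just left of `s⋆`,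
while it is positive at `0`: a second fixed point lies in `[0, s⋆)`.
-/

open Set Filter Topology

lemma eventually_neg_nhdsLT_of_hasDerivAt_pos {g : ℝ → ℝ} {b d : ℝ} (hd : HasDerivAt g d b)
    (hd0 : 0 < d) (hb : g b = 0) : ∀ᶠ y in 𝓝[<] b, g y < 0 := by
  have hslope : ∀ᶠ y in 𝓝[<] b, 0 < slope g b y :=
    ((hasDerivAt_iff_tendsto_slope.mp hd).eventually (eventually_gt_nhds hd0)).filter_mono
      (nhdsLT_le_nhdsNE b)
  filter_upwards [hslope, self_mem_nhdsWithin] with y hy hyb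
  exact neg_of_slope_pos hyb hy hb

lemma exists_mem_Ico_eq_zero_of_hasDerivAt_pos {g : ℝ → ℝ} {a b d : ℝ} (hab : a < b)
    (hg : ContinuousOn g (Icc a b)) (ha : 0 < g a) (hb : g b = 0) (hd : HasDerivAt g d b)
    (hd0 : 0 < d) : ∃ t ∈ Ico a b, g t = 0 := by
  obtain ⟨y, hy, hya, hyb⟩ :=
    ((eventually_neg_nhdsLT_of_hasDerivAt_pos hd hd0 hb).and (Ioo_mem_nhdsLT hab)).exists
  obtain ⟨t, ht, hgt⟩ := intermediate_value_Icc' hya.le (hg.mono (Icc_subset_Icc le_rfl hyb.le))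
    ⟨hy.le, ha.le⟩
  exact ⟨t, ⟨ht.1, ht.2.trans_lt hyb⟩, hgt⟩

-- `1 - φ_p s`
def oneSubPgf (p s : ℝ) : ℝ := p - p * s ^ 4

lemma hasDerivAt_oneSubPgf_comp_oneSubPgf (p s : ℝ) :
    HasDerivAt (oneSubPgf p ∘ oneSubPgf p) (16 * p ^ 5 * (s * (1 - s ^ 4)) ^ 3) s := by
  have hF : ∀ x, HasDerivAt (oneSubPgf p) (-(p * (4 * x ^ 3))) x := fun x => by
    unfold oneSubPgf
    simpa using ((hasDerivAt_pow 4 x).const_mul p).const_sub p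
  refine ((hF (oneSubPgf p s)).comp s (hF s)).congr_deriv ?_
  simp only [oneSubPgf]
  ring

lemma continuous_oneSubPgf (p : ℝ) : Continuous (oneSubPgf p) := by
  unfold oneSubPgf
  fun_prop

lemma exists_mem_Ioc_oneSubPgf_eq_self {p : ℝ} (hp : 0 < p) : ∃ s ∈ Ioc 0 1, oneSubPgf p s = s := by
  obtain ⟨s, hs, hzero⟩ := intermediate_value_Icc' zero_le_one
    ((continuous_oneSubPgf p).sub continuous_id).continuousOn
    (show (0 : ℝ) ∈ Icc (oneSubPgf p 1 - 1) (oneSubPgf p 0 - 0) by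
      simp only [oneSubPgf]; constructor <;> linarith)
  have hFs : oneSubPgf p s = s := sub_eq_zero.mp hzero
  refine ⟨s, ⟨hs.1.lt_of_ne ?_, hs.2⟩, hFs⟩
  rintro rfl
  simp only [oneSubPgf] at hFs
  linarith

section Peak

variable {c : ℝ}

lemma mul_one_sub_pow_four_lt (hc : 0 < c) (hc4 : 5 * c ^ 4 = 1) {x : ℝ} (hx : 0 ≤ x)
    (hxc : x ≠ c) : x * (1 - x ^ 4) < 4 * c / 5 := by
  have hfactor : 4 * c / 5 - x * (1 - x ^ 4) =
      (x - c) ^ 2 * (x ^ 3 + 2 * c * x ^ 2 + 3 * c ^ 2 * x + 4 * c ^ 3) := by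
    linear_combination (x - 4 * c / 5) * hc4
  have hsq : 0 < (x - c) ^ 2 := by positivity [sub_ne_zero.mpr hxc]
  have hcubic : 0 < x ^ 3 + 2 * c * x ^ 2 + 3 * c ^ 2 * x + 4 * c ^ 3 := by positivity
  nlinarith [mul_pos hsq hcubic]

lemma sixteen_mul_pow_five_mul_cube_lt_one (hc : 0 < c) (hc4 : 5 * c ^ 4 = 1) {p x : ℝ}
    (hp : 0 < p) (hpc : p ≤ 5 * c / 4) (hx : 0 ≤ x) (hxc : x ≠ c) :
    16 * p ^ 5 * (x * (1 - x ^ 4)) ^ 3 < 1 :=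
  calc 16 * p ^ 5 * (x * (1 - x ^ 4)) ^ 3
      < 16 * p ^ 5 * (4 * c / 5) ^ 3 := mul_lt_mul_of_pos_left
        (Odd.strictMono_pow (by decide) (mul_one_sub_pow_four_lt hc hc4 hx hxc)) (by positivity)
    _ ≤ 16 * (5 * c / 4) ^ 5 * (4 * c / 5) ^ 3 := by gcongr
    _ = 1 := by linear_combination (5 * c ^ 4 + 1) * hc4

lemma strictAntiOn_oneSubPgf_comp_oneSubPgf_sub (hc : 0 < c) (hc4 : 5 * c ^ 4 = 1) {p : ℝ}
    (hp : 0 < p) (hpc : p ≤ 5 * c / 4) :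
    StrictAntiOn (fun s => (oneSubPgf p ∘ oneSubPgf p) s - s) (Ici 0) := by
  have hd : ∀ x, HasDerivAt (fun s => (oneSubPgf p ∘ oneSubPgf p) s - s)
      (16 * p ^ 5 * (x * (1 - x ^ 4)) ^ 3 - 1) x := fun x =>
    (hasDerivAt_oneSubPgf_comp_oneSubPgf p x).sub (hasDerivAt_id x)
  have hcont : Continuous fun s => (oneSubPgf p ∘ oneSubPgf p) s - s :=
    continuous_iff_continuousAt.mpr fun x => (hd x).continuousAt
  have hneg : ∀ x, 0 ≤ x → x ≠ c → 16 * p ^ 5 * (x * (1 - x ^ 4)) ^ 3 - 1 < 0 := fun x hx hxc =>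
    sub_neg.mpr (sixteen_mul_pow_five_mul_cube_lt_one hc hc4 hp hpc hx hxc)
  have hleft := strictAntiOn_of_hasDerivWithinAt_neg (convex_Icc 0 c) hcont.continuousOn
    (fun x _ => (hd x).hasDerivWithinAt) (fun x hx => by
      rw [interior_Icc] at hx
      exact hneg x hx.1.le hx.2.ne)
  have hright := strictAntiOn_of_hasDerivWithinAt_neg (convex_Ici c) hcont.continuousOn
    (fun x _ => (hd x).hasDerivWithinAt) (fun x hx => by
      rw [interior_Ici] at hx
      exact hneg x (hc.trans hx).le hx.ne')
  rw [← Icc_union_Ici_eq_Ici hc.le]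
  exact hleft.union hright (isGreatest_Icc hc.le) isLeast_Ici

lemma one_lt_four_mul_pow_three_of_oneSubPgf_eq_self (hc : 0 < c) (hc4 : 5 * c ^ 4 = 1)
    {p s : ℝ} (hpc : 5 * c / 4 < p) (hs : 0 ≤ s) (hfix : oneSubPgf p s = s) :
    1 < 4 * p * s ^ 3 := by
  simp only [oneSubPgf] at hfix
  by_contra! hle
  have hs4 : 5 * s ^ 4 ≤ 1 := by nlinarith [pow_nonneg hs 4]
  have hsc : s ≤ c := by
    refine le_of_pow_le_pow_left₀ (n := 4) (by norm_num) hc.le ?_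
    linarith
  -- `s / (1 - s⁴)` is increasing, so `p = s / (1 - s⁴) ≤ c / (1 - c⁴) = 5c/4`.
  have hsc4 : s ^ 4 ≤ c ^ 4 := by gcongr
  have hgap : 4 * s ≤ 5 * c * (1 - s ^ 4) := by nlinarith
  nlinarith

end Peak

lemma exists_mem_Ico_oneSubPgf_comp_oneSubPgf_eq_self {p s : ℝ} (hp0 : 0 < p) (hp1 : p < 1)
    (hs : s ∈ Ioc 0 1) (hfix : oneSubPgf p s = s) (hps : 1 < 4 * p * s ^ 3) :
    ∃ t ∈ Ico 0 s, (oneSubPgf p ∘ oneSubPgf p) t = t := by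
  have hd := (hasDerivAt_oneSubPgf_comp_oneSubPgf p s).sub (hasDerivAt_id s)
  have hslope : 16 * p ^ 5 * (s * (1 - s ^ 4)) ^ 3 - 1 = (4 * p * s ^ 3) ^ 2 - 1 := by
    simp only [oneSubPgf] at hfix
    linear_combination 16 * p ^ 2 * s ^ 3 * (p ^ 2 * (1 - s ^ 4) ^ 2 + p * (1 - s ^ 4) * s + s ^ 2)
      * hfix
  rw [hslope] at hd
  have hg0 : 0 < (oneSubPgf p ∘ oneSubPgf p) 0 - 0 := by
    simp only [oneSubPgf, Function.comp]
    nlinarith [pow_lt_one₀ hp0.le hp1 (n := 4) (by norm_num)]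
  obtain ⟨t, ht, hgt⟩ := exists_mem_Ico_eq_zero_of_hasDerivAt_pos hs.1
    (((continuous_oneSubPgf p).comp (continuous_oneSubPgf p)).sub continuous_id).continuousOn
    hg0 (by simp [hfix]) hd (by nlinarith)
  exact ⟨t, ht, sub_eq_zero.mp hgt⟩

lemma five_mul_rpow_three_fourths_div_five_pow_four :
    5 * ((5 : ℝ) ^ ((3 : ℝ) / 4) / 5) ^ 4 = 1 := by
  rw [div_pow, ← Real.rpow_natCast, ← Real.rpow_mul (by norm_num)]
  norm_num

/-- for `p ∈ (0,1)`, with `φ_p(s) = (1−p) + p s⁴` and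
`h_p(s) = 1 − φ_p(1 − φ_p(s))`, the map `h_p` has a unique fixed point in
`[0,1]` if and only if `p ≤ 5^{3/4}/4`. -/
theorem stmt19 (p : ℝ) (hp0 : 0 < p) (hp1 : p < 1)
    (φ : ℝ → ℝ) (hφ : ∀ s : ℝ, φ s = (1 - p) + p * s ^ 4)
    (h : ℝ → ℝ) (hh : ∀ s : ℝ, h s = 1 - φ (1 - φ s)) :
    (∃! s : ℝ, s ∈ Set.Icc (0 : ℝ) 1 ∧ h s = s) ↔
      p ≤ (5 : ℝ) ^ ((3 : ℝ) / 4) / 4 := by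
  set c : ℝ := (5 : ℝ) ^ ((3 : ℝ) / 4) / 5
  have hc : 0 < c := by positivity
  have hc4 : 5 * c ^ 4 = 1 := five_mul_rpow_three_fourths_div_five_pow_four
  have hτ : (5 : ℝ) ^ ((3 : ℝ) / 4) / 4 = 5 * c / 4 := by ring
  have hF : h = oneSubPgf p ∘ oneSubPgf p := funext fun s => by
    simp only [hh, hφ, oneSubPgf, Function.comp]
    ring
  rw [hτ, hF]
  obtain ⟨s, hs, hFs⟩ := exists_mem_Ioc_oneSubPgf_eq_self hp0
  have hs_fixed : s ∈ Icc (0 : ℝ) 1 ∧ (oneSubPgf p ∘ oneSubPgf p) s = s :=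
    ⟨Ioc_subset_Icc_self hs, by simp [hFs]⟩
  constructor
  · intro huniq
    by_contra! hpc
    obtain ⟨t, ht, hFt⟩ := exists_mem_Ico_oneSubPgf_comp_oneSubPgf_eq_self hp0 hp1 hs hFs
      (one_lt_four_mul_pow_three_of_oneSubPgf_eq_self hc hc4 hpc hs.1.le hFs)
    exact ht.2.ne (huniq.unique ⟨⟨ht.1, ht.2.le.trans hs.2⟩, hFt⟩ hs_fixed)
  · intro hpc
    refine ⟨s, hs_fixed, fun t ⟨ht, hFt⟩ => ?_⟩
    refine (strictAntiOn_oneSubPgf_comp_oneSubPgf_sub hc hc4 hp0 hpc).injOn ht.1 hs_fixed.1.1 ?_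
    simp only [hFt, hs_fixed.2, sub_self]
end
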